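/- The explicitly controlled product realises the dialectica interpretation of Π⁰₁ countable choice: let A : ℕ → X → R → Prop, let ε : ℕ → (X → R) → X satisfy A n (ε n p) (p (ε n p)) for all n and all p : X → R, let q : (ℕ → X) → R and ω : (ℕ → X) → ℕ, and let E be an explicitly controlled product for ω of the selection functions s ↦ ε |s|. Then α = E ⟨⟩ q satisfies A n (α n) (q α) for every n ≤ ω α. -/
import Mathlib


/-- Prepend a single element to an infinite sequence. -/
def consSeq {X : Type*} (x : X) (α : ℕ → X) : ℕ → X
  | 0 => x
  | n + 1 => α n

/-- The canonical infinite extension `ŝ` of a finite sequence `s` by the distinguished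
element `z`. -/
def extSeq {X : Type*} (z : X) (s : List X) : ℕ → X :=
  fun n => s.getD n z

/-- Concatenation `t * α` of a finite sequence `t` with an infinite sequence `α`. -/
def prependSeq {X : Type*} (t : List X) (α : ℕ → X) : ℕ → X :=
  fun n => t.getD n (α (n - t.length))

/-- The initial segment `α|n` of the infinite sequence `α`, of length `n`. -/
def initSeg {X : Type*} (α : ℕ → X) (n : ℕ) : List X :=
  (List.range n).map α

/-- `IsECP z ε ω E` says that `E` is an explicitly controlled product of the selection
functions `ε_s : (X → R) → X` for the control functional `ω`:  `E s q = 0` (the constant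
`z` sequence) if `ω ŝ < |s|`, and otherwise `E s q = a * E (s * a) q_a` where
`a = ε_s (fun x => q_x (E (s * x) q_x))` and `q_x α = q (x * α)`. -/
def IsECP {X R : Type*} (z : X) (ε : List X → (X → R) → X) (ω : (ℕ → X) → ℕ)
    (E : List X → ((ℕ → X) → R) → ℕ → X) : Prop :=
  ∀ (s : List X) (q : (ℕ → X) → R),
    (ω (extSeq z s) < s.length → E s q = fun _ => z) ∧
    (¬ ω (extSeq z s) < s.length →
      E s q =
        (let a := ε s (fun x => q (consSeq x (E (s ++ [x]) (fun α => q (consSeq x α)))));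
         consSeq a (E (s ++ [a]) (fun α => q (consSeq a α)))))

lemma prependSeq_nil {X : Type*} (α : ℕ → X) : prependSeq [] α = α := by
  funext n; simp [prependSeq]

lemma prependSeq_cons {X : Type*} (s : List X) (x : X) (α : ℕ → X) :
    prependSeq s (consSeq x α) = prependSeq (s ++ [x]) α := by
  funext n
  unfold prependSeq
  rcases lt_trichotomy n s.length with h | h | h
  · rw [List.getD_append _ _ _ _ h, List.getD_eq_getElem _ _ h,
      List.getD_eq_getElem _ _ h]
  · subst h
    rw [List.getD_eq_default _ _ le_rfl, Nat.sub_self]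
    rw [List.getD_append_right _ _ _ _ le_rfl, Nat.sub_self]
    simp [consSeq]
  · rw [List.getD_eq_default _ _ h.le, List.getD_eq_default _ _ (by simp; omega)]
    have : n - s.length = (n - (s ++ [x]).length) + 1 := by simp; omega
    rw [this]; simp [consSeq]

lemma prependSeq_ge {X : Type*} (s : List X) (α : ℕ → X) (n : ℕ) (h : s.length ≤ n) :
    prependSeq s α n = α (n - s.length) := by
  simp only [prependSeq]
  rw [List.getD_eq_default _ _ h]

lemma extSeq_eq_prepend {X : Type*} (z : X) (s : List X) :
    extSeq z s = prependSeq s (fun _ => z) := rfl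

lemma initSeg_succ {X : Type*} (α : ℕ → X) (k : ℕ) :
    initSeg α (k + 1) = initSeg α k ++ [α k] := by
  simp [initSeg, List.range_succ]

lemma initSeg_length {X : Type*} (α : ℕ → X) (k : ℕ) :
    (initSeg α k).length = k := by simp [initSeg]

/-- The explicitly controlled product realises the dialectica interpretation of `Π⁰₁`
countable choice: if `ε n` witnesses the n.c.i. of `A n` for every `n`, then
`α = E ⟨⟩ q` satisfies `A n (α n) (q α)` for every `n ≤ ω α`. -/
theorem ecp_realizes_countable_choice {X R : Type*} (z : X)
    (A : ℕ → X → R → Prop) (ε : ℕ → (X → R) → X)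
    (hε : ∀ (n : ℕ) (p : X → R), A n (ε n p) (p (ε n p)))
    (q : (ℕ → X) → R) (ω : (ℕ → X) → ℕ)
    (E : List X → ((ℕ → X) → R) → ℕ → X)
    (hE : IsECP z (fun s => ε s.length) ω E) :
    ∀ n ≤ ω (E [] q), A n (E [] q n) (q (E [] q)) := by
  set β := E [] q with hβ
  -- invariant: as long as the control never stopped, β unfolds along its initial segments
  have inv : ∀ k, (∀ j, j < k → ¬ ω (extSeq z (initSeg β j)) < j) →
      β = prependSeq (initSeg β k)
        (E (initSeg β k) (fun α => q (prependSeq (initSeg β k) α))) := by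
    intro k
    induction k with
    | zero =>
      intro _
      simp only [initSeg, List.range_zero, List.map_nil]
      rw [prependSeq_nil]
      have : (fun α => q (prependSeq ([] : List X) α)) = q := by
        funext α; rw [prependSeq_nil]
      rw [this]
    | succ k ih =>
      intro h
      have hk := ih (fun j hj => h j (Nat.lt_succ_of_lt hj))
      have hnotstop := h k (Nat.lt_succ_self k)
      set s := initSeg β k with hs
      have hlen : s.length = k := initSeg_length β k
      set qs := fun α => q (prependSeq s α) with hqs
      have hstep := (hE s qs).2 (by rw [hlen]; exact hnotstop)
      simp only [] at hstep
      set a := ε s.length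
          (fun x => qs (consSeq x (E (s ++ [x]) (fun α => qs (consSeq x α))))) with ha
      have hβk : β k = a := by
        rw [hk, prependSeq_ge s _ k hlen.le, hlen, Nat.sub_self, hstep]
        rfl
      have hseg : initSeg β (k + 1) = s ++ [a] := by
        rw [initSeg_succ, hβk, hs]
      rw [hseg]
      have hqs' : (fun α => qs (consSeq a α)) = fun α => q (prependSeq (s ++ [a]) α) := by
        funext α; rw [hqs]; simp only []; rw [prependSeq_cons]
      rw [hk, hstep, prependSeq_cons, hqs']
  -- no stop up to ω β
  have nostop : ∀ j, j ≤ ω β → ¬ ω (extSeq z (initSeg β j)) < j := by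
    intro j
    induction j using Nat.strong_induction_on with
    | _ j ih =>
      intro hj hcon
      have hinv := inv j (fun j' hj' => ih j' hj' (le_trans hj'.le hj))
      have hstop := (hE (initSeg β j) (fun α => q (prependSeq (initSeg β j) α))).1
        (by rw [initSeg_length]; exact hcon)
      rw [hstop, ← extSeq_eq_prepend] at hinv
      rw [← hinv] at hcon
      omega
  intro n hn
  have hinv := inv n (fun j hj => nostop j (le_trans hj.le hn))
  set s := initSeg β n with hs
  have hlen : s.length = n := initSeg_length β n
  set qs := fun α => q (prependSeq s α) with hqs
  have hstep := (hE s qs).2 (by rw [hlen]; exact nostop n hn)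
  simp only [] at hstep
  set p := fun x => qs (consSeq x (E (s ++ [x]) (fun α => qs (consSeq x α)))) with hp
  set a := ε s.length p with ha
  have hβn : β n = a := by
    rw [hinv, prependSeq_ge s _ n hlen.le, hlen, Nat.sub_self, hstep]
    rfl
  have hqβ : q β = p a := by
    rw [hinv, hstep]
  rw [hβn, hqβ, ha, hlen]
  exact hε n p
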